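/- arXiv:1011.2888 — 5 statements merged into one kernel-verified Lean document; each statement's English description precedes it below -/
import Mathlib

section
/- Every Condorcet domain D ⊆ L([n]) that contains the order α = 1<2<...<n and the order ω = n<...<2<1 is contained in D(c) for some casting c; that is, there is an assignment c of one of the symbols ∩, ∪, →, ← to each triple i<j<k such that the restriction of every member of D to each triple {i,j,k} lies in D₃(c(ijk)). -/
/-- The set of linear orders on `{1,…,n}`, encoded as words (lists) listing the
alternatives from worst to best; such a word is a permutation of `1,2,…,n`. -/
def LinWords (n : ℕ) : Set (List ℕ) := {l | l.Perm (List.range' 1 n)}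

/-- Linear orders on a finite ground set `X ⊆ ℕ`, encoded as words. -/
def LinWordsOn (X : Finset ℕ) : Set (List ℕ) := {l | l.Perm (X.sort (· ≤ ·))}

/-- `ltIn σ i j` : `i` occurs before (i.e. is worse than) `j` in the word `σ`;
this is the relation `i <_σ j`. -/
def ltIn (σ : List ℕ) (i j : ℕ) : Prop := σ.idxOf i < σ.idxOf j

instance (σ : List ℕ) (i j : ℕ) : Decidable (ltIn σ i j) :=
  inferInstanceAs (Decidable (σ.idxOf i < σ.idxOf j))

/-- Three orders in `D` whose restrictions to `{i,j,k}` are exactly the three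
cyclic patterns `i<j<k`, `j<k<i`, `k<i<j`. -/
def CyclicTriple (D : Set (List ℕ)) (i j k : ℕ) : Prop :=
  ∃ σ₁ ∈ D, ∃ σ₂ ∈ D, ∃ σ₃ ∈ D,
    (ltIn σ₁ i j ∧ ltIn σ₁ j k) ∧ (ltIn σ₂ j k ∧ ltIn σ₂ k i) ∧ (ltIn σ₃ k i ∧ ltIn σ₃ i j)

/-- `D` is cyclic: some three distinct alternatives and three orders of `D`
restrict to `{i,j,k}` as `{ijk, jki, kij}` or as `{kji, jik, ikj}`. -/
def IsCyclicDom (D : Set (List ℕ)) : Prop :=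
  ∃ i j k : ℕ, i ≠ j ∧ j ≠ k ∧ i ≠ k ∧ (CyclicTriple D i j k ∨ CyclicTriple D k j i)

/-- On the triple `i<j<k`, in every order of `D` the alternative `j` is never the worst. -/
def PeakCond (D : Set (List ℕ)) (i j k : ℕ) : Prop :=
  ∀ σ ∈ D, ¬ (ltIn σ j i ∧ ltIn σ j k)

/-- On the triple `i<j<k`, in every order of `D` the alternative `j` is never the best. -/
def PitCond (D : Set (List ℕ)) (i j k : ℕ) : Prop :=
  ∀ σ ∈ D, ¬ (ltIn σ i j ∧ ltIn σ k j)

/-- `D` is a peak-pit domain: every triple `i<j<k` in `[n]` satisfies the peak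
condition or the pit condition. -/
def IsPeakPit (n : ℕ) (D : Set (List ℕ)) : Prop :=
  ∀ i j k : ℕ, 1 ≤ i → i < j → j < k → k ≤ n → (PeakCond D i j k ∨ PitCond D i j k)

/-- The four symbols a casting can assign to a triple. -/
inductive Symb | peak | pit | right | left

/-- Membership of (the restriction of) `σ` in the four-element domain `D₃(s)` on
the triple `i<j<k`: for `∩`, `j` is not worst; for `∪`, `j` is not best; for `→`,
`k` is not middle; for `←`, `i` is not middle. -/
def TripleCond : Symb → List ℕ → ℕ → ℕ → ℕ → Prop
  | Symb.peak, σ, i, j, k => ¬ (ltIn σ j i ∧ ltIn σ j k)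
  | Symb.pit,  σ, i, j, k => ¬ (ltIn σ i j ∧ ltIn σ k j)
  | Symb.right, σ, i, j, k => ¬ ((ltIn σ i k ∧ ltIn σ k j) ∨ (ltIn σ j k ∧ ltIn σ k i))
  | Symb.left,  σ, i, j, k => ¬ ((ltIn σ j i ∧ ltIn σ i k) ∨ (ltIn σ k i ∧ ltIn σ i j))

/-- The domain `D(c)` of a casting `c`: all linear orders on `[n]` whose restriction
to every triple `i<j<k` lies in `D₃(c i j k)`. -/
def CastDomain (n : ℕ) (c : ℕ → ℕ → ℕ → Symb) : Set (List ℕ) :=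
  {σ | σ ∈ LinWords n ∧ ∀ i j k : ℕ, 1 ≤ i → i < j → j < k → k ≤ n → TripleCond (c i j k) σ i j k}

/-- The set of inversions of a word `σ`: pairs `(i,j)` of alternatives of `σ`
with `i < j` as integers and `j <_σ i`. -/
def InvPairs (σ : List ℕ) : Set (ℕ × ℕ) :=
  {p | p.1 ∈ σ ∧ p.2 ∈ σ ∧ p.1 < p.2 ∧ ltIn σ p.2 p.1}

/-- `τ` covers `σ` in the weak Bruhat order: `InvPairs τ` is `InvPairs σ` plus exactly one pair. -/
def Covers (τ σ : List ℕ) : Prop :=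
  ∃ p : ℕ × ℕ, p ∉ InvPairs σ ∧ InvPairs τ = insert p (InvPairs σ)

/-- Adjacency in the Bruhat graph. -/
def BruhatAdj (σ τ : List ℕ) : Prop := Covers τ σ ∨ Covers σ τ

/-- A path in the Bruhat graph from `σ` to `τ` all of whose vertices lie in `D`. -/
def PathIn (D : Set (List ℕ)) (σ τ : List ℕ) : Prop :=
  ∃ (m : ℕ) (f : ℕ → List ℕ), f 0 = σ ∧ f m = τ ∧
    (∀ t ≤ m, f t ∈ D) ∧ ∀ t < m, BruhatAdj (f t) (f (t + 1))

/-- `D` is semi-connected (ground set `[n]`): it contains the increasing order `α`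
and the decreasing order `ω` and a Bruhat path from `α` to `ω` inside `D`. -/
def SemiConnected (n : ℕ) (D : Set (List ℕ)) : Prop :=
  List.range' 1 n ∈ D ∧ (List.range' 1 n).reverse ∈ D ∧
    PathIn D (List.range' 1 n) (List.range' 1 n).reverse

/-- `D` is semi-connected on the ground set `X`. -/
def SemiConnectedOn (X : Finset ℕ) (D : Set (List ℕ)) : Prop :=
  X.sort (· ≤ ·) ∈ D ∧ (X.sort (· ≤ ·)).reverse ∈ D ∧
    PathIn D (X.sort (· ≤ ·)) (X.sort (· ≤ ·)).reverse

/-- `A` is an ideal of the order `σ`: a downward-closed (w.r.t. `<_σ`) set of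
alternatives of `σ`, i.e. an initial segment of the word `σ`. -/
def IsIdeal (σ : List ℕ) (A : Set ℕ) : Prop :=
  (∀ x ∈ A, x ∈ σ) ∧ ∀ x ∈ A, ∀ y ∈ σ, ltIn σ y x → y ∈ A

/-- The set system of all ideals of `σ`. -/
def IdSet (σ : List ℕ) : Set (Set ℕ) := {A | IsIdeal σ A}

/-- The convex hull of a set of naturals: the minimal integer interval containing it. -/
def hull (S : Set ℕ) : Set ℕ := {x | ∃ a ∈ S, ∃ b ∈ S, a ≤ x ∧ x ≤ b}

/-- `A` and `B` are separated: the convex hulls of `A \ B` and `B \ A` are disjoint. -/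
def Separated (A B : Set ℕ) : Prop := Disjoint (hull (A \ B)) (hull (B \ A))

/-- A separated set system: any two members are separated. -/
def SepSystem (𝒳 : Set (Set ℕ)) : Prop := ∀ A ∈ 𝒳, ∀ B ∈ 𝒳, Separated A B

/-- The concatenation `σ * τ` of a word on `[n]` with a word on `[n']`, the latter
shifted by `n`. -/
def concatWord (n : ℕ) (σ τ : List ℕ) : List ℕ := σ ++ τ.map (· + n)

/-- The concatenation `{σ * τ : σ ∈ D, τ ∈ D'}` of two domains. -/
def ConcatDomain (n : ℕ) (D D' : Set (List ℕ)) : Set (List ℕ) :=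
  {l | ∃ σ ∈ D, ∃ τ ∈ D', l = concatWord n σ τ}

/-- The simple-majority relation `i sm(ν) j` for an opinion `ν` on the finite domain `D`. -/
def SM (D : Finset (List ℕ)) (ν : List ℕ → ℕ) (i j : ℕ) : Prop :=
  (∑ σ ∈ D, if ltIn σ j i then ν σ else 0) > (∑ σ ∈ D, if ltIn σ i j then ν σ else 0)

/-- Fishburn's domain (the alternating scheme): for each triple `i<j<k`, if `j` is
even then `j` is not the worst of `{i,j,k}`, and if `j` is odd then `j` is not the best. -/
def Fishburn (n : ℕ) : Set (List ℕ) :=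
  {σ | σ ∈ LinWords n ∧ ∀ i j k : ℕ, 1 ≤ i → i < j → j < k → k ≤ n →
    (Even j → ¬ (ltIn σ j i ∧ ltIn σ j k)) ∧ (Odd j → ¬ (ltIn σ i j ∧ ltIn σ k j))}

/-- `γ n`: the maximum cardinality of a peak-pit domain in `L([n])`. -/
noncomputable def gamma (n : ℕ) : ℕ :=
  sSup {m | ∃ D : Set (List ℕ), D ⊆ LinWords n ∧ IsPeakPit n D ∧ D.ncard = m}

/-! Each of the four domains `D₃(s)` on a triple `i<j<k` omits exactly two of the six
orders of the triple. If `D` met the complement of every `D₃(s)`, two of the witnesses,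
completed by `α` (pattern `ijk`) or by `ω` (pattern `kji`), would form one of the two
cyclic patterns. -/

lemma List.idxOf_range' {s n a : ℕ} (h₁ : s ≤ a) (h₂ : a < s + n) :
    (List.range' s n).idxOf a = a - s := by
  induction n generalizing s with
  | zero => omega
  | succ m ih =>
    rw [List.range'_succ]
    rcases eq_or_ne a s with rfl | has
    · simp
    · rw [List.idxOf_cons_ne _ (Ne.symm has), ih (by omega) (by omega)]
      omega

lemma List.idxOf_reverse_range' {s n a : ℕ} (h₁ : s ≤ a) (h₂ : a < s + n) :
    (List.range' s n).reverse.idxOf a = s + n - 1 - a := by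
  induction n with
  | zero => omega
  | succ m ih =>
    rw [List.range'_concat, List.reverse_append, List.reverse_singleton,
      List.singleton_append]
    rcases eq_or_ne a (s + 1 * m) with rfl | ham
    · rw [List.idxOf_cons_self]
      omega
    · rw [List.idxOf_cons_ne _ (Ne.symm ham), ih (by omega)]
      omega

lemma ltIn_range' {s n a b : ℕ} (ha : s ≤ a) (hab : a < b) (hb : b < s + n) :
    ltIn (List.range' s n) a b := by
  unfold ltIn
  rw [List.idxOf_range' ha (by omega), List.idxOf_range' (by omega) hb]
  omega

lemma ltIn_reverse_range' {s n a b : ℕ} (ha : s ≤ a) (hab : a < b) (hb : b < s + n) :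
    ltIn (List.range' s n).reverse b a := by
  unfold ltIn
  rw [List.idxOf_reverse_range' ha (by omega), List.idxOf_reverse_range' (by omega) hb]
  omega

lemma ltIn_or_ltIn {σ : List ℕ} {a b : ℕ} (ha : a ∈ σ) (hab : a ≠ b) :
    ltIn σ a b ∨ ltIn σ b a := by
  rcases Nat.lt_trichotomy (σ.idxOf a) (σ.idxOf b) with h | h | h
  · exact .inl h
  · exact absurd ((List.idxOf_inj ha).1 h) hab
  · exact .inr h

lemma mem_of_mem_linWords {n a : ℕ} {σ : List ℕ} (hσ : σ ∈ LinWords n)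
    (h₁ : 1 ≤ a) (h₂ : a ≤ n) : a ∈ σ :=
  hσ.mem_iff.2 (List.mem_range'_1.2 ⟨h₁, by omega⟩)

theorem exists_tripleCond_of_not_cyclicTriple {D : Set (List ℕ)} {i j k : ℕ} (hik : i ≠ k)
    (hmem : ∀ σ ∈ D, i ∈ σ)
    (hα : ∃ α ∈ D, ltIn α i j ∧ ltIn α j k) (hω : ∃ ω ∈ D, ltIn ω k j ∧ ltIn ω j i)
    (hijk : ¬ CyclicTriple D i j k) (hkji : ¬ CyclicTriple D k j i) :
    ∃ s : Symb, ∀ σ ∈ D, TripleCond s σ i j k := by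
  obtain ⟨α, hαD, hα⟩ := hα
  obtain ⟨ω, hωD, hω⟩ := hω
  by_contra! h
  obtain ⟨σp, hσp, hp⟩ := h .peak
  obtain ⟨σq, hσq, hq⟩ := h .pit
  obtain ⟨σr, hσr, hr⟩ := h .right
  obtain ⟨σl, hσl, hl⟩ := h .left
  simp only [TripleCond, not_not] at hp hq hr hl
  -- `σr` is `ikj` or `jki`, `σl` is `jik` or `kij`; in the two mixed cases `σp` (`j` worst)
  -- or `σq` (`j` best) supplies the missing cyclic pattern.
  rcases hr with hr | hr <;> rcases hl with hl | hl
  · exact hkji ⟨ω, hωD, σl, hσl, σr, hσr, hω, hl, hr⟩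
  · rcases ltIn_or_ltIn (hmem σp hσp) hik with h | h
    · exact hkji ⟨ω, hωD, σp, hσp, σr, hσr, hω, ⟨hp.1, h⟩, hr⟩
    · exact hijk ⟨α, hαD, σp, hσp, σl, hσl, hα, ⟨hp.2, h⟩, hl⟩
  · rcases ltIn_or_ltIn (hmem σq hσq) hik with h | h
    · exact hkji ⟨ω, hωD, σl, hσl, σq, hσq, hω, hl, ⟨h, hq.2⟩⟩
    · exact hijk ⟨α, hαD, σr, hσr, σq, hσq, hα, hr, ⟨h, hq.1⟩⟩
  · exact hijk ⟨α, hαD, σr, hσr, σl, hσl, hα, hr, hl⟩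

lemma not_cyclicTriple_of_not_isCyclicDom {D : Set (List ℕ)} (hCD : ¬ IsCyclicDom D)
    {a b c : ℕ} (hab : a ≠ b) (hbc : b ≠ c) (hac : a ≠ c) : ¬ CyclicTriple D a b c :=
  fun h => hCD ⟨a, b, c, hab, hbc, hac, .inl h⟩

theorem exists_tripleCond_of_not_isCyclicDom {n : ℕ} {D : Set (List ℕ)} (hD : D ⊆ LinWords n)
    (hα : List.range' 1 n ∈ D) (hω : (List.range' 1 n).reverse ∈ D) (hCD : ¬ IsCyclicDom D)
    {i j k : ℕ} (h₁ : 1 ≤ i) (h₂ : i < j) (h₃ : j < k) (h₄ : k ≤ n) :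
    ∃ s : Symb, ∀ σ ∈ D, TripleCond s σ i j k :=
  exists_tripleCond_of_not_cyclicTriple (by omega)
    (fun _ hσ => mem_of_mem_linWords (hD hσ) h₁ (by omega))
    ⟨_, hα, ltIn_range' h₁ h₂ (by omega), ltIn_range' (by omega) h₃ (by omega)⟩
    ⟨_, hω, ltIn_reverse_range' (by omega) h₃ (by omega), ltIn_reverse_range' h₁ h₂ (by omega)⟩
    (not_cyclicTriple_of_not_isCyclicDom hCD (by omega) (by omega) (by omega))
    (not_cyclicTriple_of_not_isCyclicDom hCD (by omega) (by omega) (by omega))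

/-- every Condorcet domain containing `α` and `ω` is contained in
`D(c)` for some casting `c`. -/
theorem statement_1 (n : ℕ) (D : Set (List ℕ)) (hD : D ⊆ LinWords n)
    (hα : List.range' 1 n ∈ D) (hω : (List.range' 1 n).reverse ∈ D)
    (hCD : ¬ IsCyclicDom D) :
    ∃ c : ℕ → ℕ → ℕ → Symb, D ⊆ CastDomain n c := by
  have key : ∀ i j k, ∃ s : Symb,
      1 ≤ i → i < j → j < k → k ≤ n → ∀ σ ∈ D, TripleCond s σ i j k := by
    intro i j k
    by_cases hijk : 1 ≤ i ∧ i < j ∧ j < k ∧ k ≤ n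
    · obtain ⟨h₁, h₂, h₃, h₄⟩ := hijk
      obtain ⟨s, hs⟩ := exists_tripleCond_of_not_isCyclicDom hD hα hω hCD h₁ h₂ h₃ h₄
      exact ⟨s, fun _ _ _ _ => hs⟩
    · exact ⟨.peak, fun h₁ h₂ h₃ h₄ => absurd ⟨h₁, h₂, h₃, h₄⟩ hijk⟩
  choose c hc using key
  exact ⟨c, fun σ hσ => ⟨hD hσ, fun i j k h₁ h₂ h₃ h₄ => hc i j k h₁ h₂ h₃ h₄ σ hσ⟩⟩
end

section
/- If D ⊆ L([n]) is a peak-pit domain, then the set-system Id(D) = ⋃_{σ∈D} Id(σ) of all ideals of members of D is separated: any two of its members A, B are such that the convex hulls (minimal integer intervals containing) A\B and B\A are disjoint. -/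
/-!
If `A` is an ideal of `σ` and `B` an ideal of `τ`, and the hulls of `A \ B` and `B \ A` meet, then
some `i < j < k` has `i, k ∈ A \ B` and `j ∈ B \ A` (or the roles of `A` and `B` swapped). Then `j`
is the best of `{i, j, k}` in `σ` and the worst in `τ`, so the triple satisfies neither the pit nor
the peak condition.
-/

lemma ltIn_or_ltIn_of_ne {σ : List ℕ} {x y : ℕ} (hx : x ∈ σ) (hne : x ≠ y) :
    ltIn σ x y ∨ ltIn σ y x := by
  rcases Nat.lt_trichotomy (σ.idxOf x) (σ.idxOf y) with h | h | h
  · exact Or.inl h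
  · exact absurd ((List.idxOf_inj hx).1 h) hne
  · exact Or.inr h

lemma IsIdeal.ltIn_of_mem_of_notMem {σ : List ℕ} {A : Set ℕ} (hA : IsIdeal σ A) {x y : ℕ}
    (hx : x ∈ A) (hy : y ∈ σ) (hyA : y ∉ A) : ltIn σ x y :=
  (ltIn_or_ltIn_of_ne (hA.1 x hx) (ne_of_mem_of_not_mem hx hyA)).resolve_right
    fun hyx => hyA (hA.2 x hx y hy hyx)

lemma IsIdeal.not_pitCond {D : Set (List ℕ)} {σ : List ℕ} (hσ : σ ∈ D) {A : Set ℕ}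
    (hA : IsIdeal σ A) {i j k : ℕ} (hi : i ∈ A) (hj : j ∈ σ) (hjA : j ∉ A) (hk : k ∈ A) :
    ¬ PitCond D i j k :=
  fun hpit => hpit σ hσ ⟨hA.ltIn_of_mem_of_notMem hi hj hjA, hA.ltIn_of_mem_of_notMem hk hj hjA⟩

lemma IsIdeal.not_peakCond {D : Set (List ℕ)} {τ : List ℕ} (hτ : τ ∈ D) {B : Set ℕ}
    (hB : IsIdeal τ B) {i j k : ℕ} (hi : i ∈ τ) (hiB : i ∉ B) (hj : j ∈ B) (hk : k ∈ τ)
    (hkB : k ∉ B) : ¬ PeakCond D i j k :=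
  fun hpeak => hpeak τ hτ ⟨hB.ltIn_of_mem_of_notMem hj hi hiB, hB.ltIn_of_mem_of_notMem hj hk hkB⟩

lemma IsPeakPit.not_interleaved {n : ℕ} {D : Set (List ℕ)} (hD : D ⊆ LinWords n)
    (hpp : IsPeakPit n D) {σ τ : List ℕ} (hσ : σ ∈ D) (hτ : τ ∈ D) {A B : Set ℕ}
    (hA : IsIdeal σ A) (hB : IsIdeal τ B) {i j k : ℕ} (hij : i < j) (hjk : j < k)
    (hi : i ∈ A \ B) (hj : j ∈ B \ A) (hk : k ∈ A \ B) : False := by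
  have hiσ := hA.1 i hi.1
  have hkσ := hA.1 k hk.1
  have hjτ := hB.1 j hj.1
  have transfer {ρ ρ' : List ℕ} (hρ : ρ ∈ D) (hρ' : ρ' ∈ D) {x : ℕ} (hx : x ∈ ρ) : x ∈ ρ' :=
    (hD hρ').mem_iff.2 ((hD hρ).mem_iff.1 hx)
  have hi_range := List.mem_range'_1.1 ((hD hσ).mem_iff.1 hiσ)
  have hk_range := List.mem_range'_1.1 ((hD hσ).mem_iff.1 hkσ)
  rcases hpp i j k hi_range.1 hij hjk (by omega) with hpeak | hpit
  · exact hB.not_peakCond hτ (transfer hσ hτ hiσ) hi.2 hj.1 (transfer hσ hτ hkσ) hk.2 hpeak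
  · exact hA.not_pitCond hσ hi.1 (transfer hτ hσ hjτ) hj.2 hk.1 hpit

lemma disjoint_hull_of_not_interleaved {S T : Set ℕ} (hST : Disjoint S T)
    (hS : ∀ i ∈ S, ∀ j ∈ T, ∀ k ∈ S, i < j → j < k → False)
    (hT : ∀ i ∈ T, ∀ j ∈ S, ∀ k ∈ T, i < j → j < k → False) :
    Disjoint (hull S) (hull T) := by
  rw [Set.disjoint_left]
  rintro x ⟨s₁, hs₁, s₂, hs₂, hs₁x, hxs₂⟩ ⟨t₁, ht₁, t₂, ht₂, ht₁x, hxt₂⟩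
  have hne {s t : ℕ} (hs : s ∈ S) (ht : t ∈ T) : s ≠ t := hST.ne_of_mem hs ht
  rcases (hne hs₁ ht₁).lt_or_gt with h | h
  · exact hS s₁ hs₁ t₁ ht₁ s₂ hs₂ h ((hne hs₂ ht₁).symm.lt_of_le (ht₁x.trans hxs₂))
  · exact hT t₁ ht₁ s₁ hs₁ t₂ ht₂ h ((hne hs₁ ht₂).lt_of_le (hs₁x.trans hxt₂))

/-- if `D` is a peak-pit domain then the set system `Id(D)` of all
ideals of members of `D` is separated. -/
theorem statement_8 (n : ℕ) (D : Set (List ℕ)) (hD : D ⊆ LinWords n)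
    (hpp : IsPeakPit n D) :
    SepSystem {A : Set ℕ | ∃ σ ∈ D, IsIdeal σ A} := by
  rintro A ⟨σ, hσ, hA⟩ B ⟨τ, hτ, hB⟩
  exact disjoint_hull_of_not_interleaved disjoint_sdiff_sdiff
    (fun i hi j hj k hk hij hjk => hpp.not_interleaved hD hσ hτ hA hB hij hjk hi hj hk)
    (fun i hi j hj k hk hij hjk => hpp.not_interleaved hD hτ hσ hB hA hij hjk hi hj hk)
end

section
/- For two linear orders σ, τ ∈ L([n]), the set-system Id(σ) ∪ Id(τ) is separated if and only if for each triple i<j<k, the restrictions of σ and τ to {i,j,k} simultaneously satisfy the peak condition (j is not the worst in either restriction) or simultaneously satisfy the pit condition (j is not the best in either restriction). -/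
/-!
For an ideal `A` of `ρ₁` and an ideal `B` of `ρ₂`, every element of `A \ B` lies below
every element of `B \ A` in `ρ₁` and above it in `ρ₂`. The hulls of the two differences
meet exactly when some `j` of one difference lies strictly between `i < k` of the other,
and then `j` is the best of `{i, j, k}` in one order and the worst in the other.
Conversely, if `j` is the worst of `{i, j, k}` in `ρ` and the best in `ρ'`, the ideal of `ρ`
generated by `j` and the ideal of `ρ'` of the elements below `j` are not separated.
-/

def Interleaved (S T : Set ℕ) : Prop :=
  ∃ i j k, i < j ∧ j < k ∧ i ∈ S ∧ j ∈ T ∧ k ∈ S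

theorem not_disjoint_hull_iff {S T : Set ℕ} (hST : Disjoint S T) :
    ¬ Disjoint (hull S) (hull T) ↔ Interleaved S T ∨ Interleaved T S := by
  constructor
  · rw [Set.not_disjoint_iff]
    rintro ⟨x, ⟨a₁, ha₁, a₂, ha₂, hax, hxa⟩, ⟨b₁, hb₁, b₂, hb₂, hbx, hxb⟩⟩
    have hne : ∀ s ∈ S, ∀ t ∈ T, s ≠ t := fun s hs t ht hst =>
      Set.disjoint_left.1 hST hs (hst ▸ ht)
    rcases lt_or_gt_of_ne (hne a₁ ha₁ b₁ hb₁) with h | h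
    · exact .inl ⟨a₁, b₁, a₂, h, (hbx.trans hxa).lt_of_ne (hne a₂ ha₂ b₁ hb₁).symm, ha₁, hb₁, ha₂⟩
    · exact .inr ⟨b₁, a₁, b₂, h, (hax.trans hxb).lt_of_ne (hne a₁ ha₁ b₂ hb₂), hb₁, ha₁, hb₂⟩
  · rintro (⟨i, j, k, hij, hjk, hi, hj, hk⟩ | ⟨i, j, k, hij, hjk, hi, hj, hk⟩) hdisj
    · exact Set.disjoint_left.1 hdisj ⟨i, hi, k, hk, hij.le, hjk.le⟩ ⟨j, hj, j, hj, le_rfl, le_rfl⟩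
    · exact Set.disjoint_left.1 hdisj ⟨j, hj, j, hj, le_rfl, le_rfl⟩ ⟨i, hi, k, hk, hij.le, hjk.le⟩

theorem ltIn_trans {ρ : List ℕ} {a b c : ℕ} (hab : ltIn ρ a b) (hbc : ltIn ρ b c) :
    ltIn ρ a c :=
  Nat.lt_trans hab hbc

theorem ltIn_irrefl (ρ : List ℕ) (a : ℕ) : ¬ ltIn ρ a a :=
  Nat.lt_irrefl _

theorem mem_iff_of_mem_linWords {n : ℕ} {ρ : List ℕ} (hρ : ρ ∈ LinWords n) {x : ℕ} :
    x ∈ ρ ↔ 1 ≤ x ∧ x ≤ n := by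
  rw [hρ.mem_iff, List.mem_range'_1]
  omega

/-- `b` need not occur in `ρ`: then `ρ.idxOf b = ρ.length`. -/
theorem IsIdeal.ltIn_of_mem_of_not_mem {ρ : List ℕ} {A : Set ℕ} (hA : IsIdeal ρ A) {a b : ℕ}
    (ha : a ∈ A) (hb : b ∉ A) : ltIn ρ a b := by
  have haρ : a ∈ ρ := hA.1 a ha
  by_cases hbρ : b ∈ ρ
  · have hba : ¬ ltIn ρ b a := fun h => hb (hA.2 a ha b hbρ h)
    have hne : ρ.idxOf a ≠ ρ.idxOf b := fun h => hb ((List.idxOf_inj haρ).1 h ▸ ha)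
    unfold ltIn at *
    omega
  · rw [ltIn, List.idxOf_eq_length hbρ]
    exact List.idxOf_lt_length_of_mem haρ

theorem isIdeal_setOf_ltIn (ρ : List ℕ) (j : ℕ) : IsIdeal ρ {x | x ∈ ρ ∧ ltIn ρ x j} :=
  ⟨fun _ hx => hx.1, fun _ hx _ hy hyx => ⟨hy, ltIn_trans hyx hx.2⟩⟩

theorem isIdeal_setOf_not_ltIn (ρ : List ℕ) (j : ℕ) : IsIdeal ρ {x | x ∈ ρ ∧ ¬ ltIn ρ j x} :=
  ⟨fun _ hx => hx.1, fun _ hx _ hy hyx => ⟨hy, fun h => hx.2 (ltIn_trans h hyx)⟩⟩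

section Domain

variable {n : ℕ} {D : Set (List ℕ)}

theorem not_interleaved_sdiff_of_isPeakPit (hD : D ⊆ LinWords n) (hpp : IsPeakPit n D)
    {ρ₁ ρ₂ : List ℕ} (h₁ : ρ₁ ∈ D) (h₂ : ρ₂ ∈ D) {A B : Set ℕ}
    (hA : IsIdeal ρ₁ A) (hB : IsIdeal ρ₂ B) : ¬ Interleaved (A \ B) (B \ A) := by
  rintro ⟨i, j, k, hij, hjk, hi, hj, hk⟩
  have hi₁ := (mem_iff_of_mem_linWords (hD h₁)).1 (hA.1 i hi.1)
  have hk₁ := (mem_iff_of_mem_linWords (hD h₁)).1 (hA.1 k hk.1)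
  rcases hpp i j k hi₁.1 hij hjk hk₁.2 with hpeak | hpit
  · exact hpeak ρ₂ h₂ ⟨hB.ltIn_of_mem_of_not_mem hj.1 hi.2, hB.ltIn_of_mem_of_not_mem hj.1 hk.2⟩
  · exact hpit ρ₁ h₁ ⟨hA.ltIn_of_mem_of_not_mem hi.1 hj.2, hA.ltIn_of_mem_of_not_mem hk.1 hj.2⟩

theorem sepSystem_of_isPeakPit (hD : D ⊆ LinWords n) (hpp : IsPeakPit n D) :
    SepSystem (⋃ ρ ∈ D, IdSet ρ) := by
  intro A hA B hB
  simp only [Set.mem_iUnion] at hA hB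
  obtain ⟨ρ₁, h₁, hA⟩ := hA
  obtain ⟨ρ₂, h₂, hB⟩ := hB
  by_contra hsep
  rcases (not_disjoint_hull_iff disjoint_sdiff_sdiff).1 hsep with h | h
  · exact not_interleaved_sdiff_of_isPeakPit hD hpp h₁ h₂ hA hB h
  · exact not_interleaved_sdiff_of_isPeakPit hD hpp h₂ h₁ hB hA h

theorem isPeakPit_of_sepSystem (hD : D ⊆ LinWords n) (hsep : SepSystem (⋃ ρ ∈ D, IdSet ρ)) :
    IsPeakPit n D := by
  intro i j k hi hij hjk hk
  by_contra! h
  simp only [PeakCond, PitCond, not_forall, not_not] at h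
  obtain ⟨⟨ρ, hρ, hji, hjk'⟩, ⟨ρ', hρ', hij', hkj⟩⟩ := h
  set A := {x | x ∈ ρ ∧ ¬ ltIn ρ j x}
  set B := {x | x ∈ ρ' ∧ ltIn ρ' x j}
  have hA : A ∈ ⋃ ρ ∈ D, IdSet ρ := Set.mem_biUnion hρ (isIdeal_setOf_not_ltIn ρ j)
  have hB : B ∈ ⋃ ρ ∈ D, IdSet ρ := Set.mem_biUnion hρ' (isIdeal_setOf_ltIn ρ' j)
  have hmem : ∀ {ρ}, ρ ∈ D → ∀ {x}, 1 ≤ x → x ≤ n → x ∈ ρ := fun hρ _ h1 h2 =>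
    (mem_iff_of_mem_linWords (hD hρ)).2 ⟨h1, h2⟩
  have hjAB : j ∈ A \ B := ⟨⟨hmem hρ (by omega) (by omega), ltIn_irrefl ρ j⟩,
    fun h => ltIn_irrefl ρ' j h.2⟩
  have hiBA : i ∈ B \ A := ⟨⟨hmem hρ' hi (by omega), hij'⟩, fun h => h.2 hji⟩
  have hkBA : k ∈ B \ A := ⟨⟨hmem hρ' (by omega) hk, hkj⟩, fun h => h.2 hjk'⟩
  exact (not_disjoint_hull_iff disjoint_sdiff_sdiff).2 (.inr ⟨i, j, k, hij, hjk, hiBA, hjAB, hkBA⟩)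
    (hsep A hA B hB)

theorem sepSystem_biUnion_idSet_iff (hD : D ⊆ LinWords n) :
    SepSystem (⋃ ρ ∈ D, IdSet ρ) ↔ IsPeakPit n D :=
  ⟨isPeakPit_of_sepSystem hD, sepSystem_of_isPeakPit hD⟩

end Domain

/-- for `σ, τ ∈ L([n])`, the system `Id(σ) ∪ Id(τ)` is separated iff
for each triple `i<j<k` the restrictions of `σ` and `τ` simultaneously satisfy the
peak condition or simultaneously satisfy the pit condition. -/
theorem statement_9 (n : ℕ) (σ τ : List ℕ) (hσ : σ ∈ LinWords n) (hτ : τ ∈ LinWords n) :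
    SepSystem (IdSet σ ∪ IdSet τ) ↔ IsPeakPit n {σ, τ} := by
  have hD : ({σ, τ} : Set (List ℕ)) ⊆ LinWords n :=
    Set.insert_subset hσ (Set.singleton_subset_iff.2 hτ)
  simpa only [Set.biUnion_insert, Set.biUnion_singleton] using sepSystem_biUnion_idSet_iff hD
end

section
/- Let σ, τ ∈ L([n]), and let ρ ∈ L([n]) be a least upper bound and μ ∈ L([n]) a greatest lower bound of {σ, τ} with respect to the weak Bruhat order ≪ (where σ' ≪ τ' means Inv(σ') ⊆ Inv(τ')). Then the following are equivalent: (a) Id(σ) ∪ Id(τ) is separated; (b) Id(σ) ∪ Id(τ) = Id(ρ) ∪ Id(μ); (c) Id(σ) ∪ Id(τ) ⊆ Id(ρ) ∪ Id(μ). -/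
/-! An ideal `A ⊆ [n]` has a least and a greatest order admitting it as an ideal: list `A`, then
its complement, both blocks increasing (`ascWord`), resp. both decreasing (`descWord`). So
`A ∈ Id(χ)` iff `ascWord A ≪ χ ≪ descWord A`. Consequently a common ideal of `σ` and `τ` is an
ideal of `ρ` and of `μ`, and an ideal `A` of `σ` is an ideal of `ρ` as soon as `τ ≪ descWord A`,
and of `μ` as soon as `ascWord A ≪ τ`; if neither holds, an inverted pair of `τ` and a
non-inverted one produce a prefix of `τ` that is not separated from `A`. This gives (a) ⇒ (c).
Ideals of two comparable orders are always separated, which gives (c) ⇒ (a). Finally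
`|Id σ| + |Id τ| = |Id ρ| + |Id μ| = 2(n + 1)`, so (c) together with
`Id σ ∩ Id τ ⊆ Id ρ ∩ Id μ` forces (b). -/

open List

section Words

variable {l l₁ l₂ σ τ : List ℕ} {n x y : ℕ}

theorem ltIn_asymm (h : ltIn σ x y) : ¬ ltIn σ y x :=
  Nat.lt_asymm h

theorem ltIn_total (hx : x ∈ σ) (hxy : x ≠ y) : ltIn σ x y ∨ ltIn σ y x :=
  Nat.lt_or_gt_of_ne fun h => hxy ((idxOf_inj hx).1 h)

theorem ltIn_iff_of_pairwise {r : ℕ → ℕ → Prop} (hl : l.Pairwise r)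
    (hr : ∀ a b, r a b → ¬ r b a) (hx : x ∈ l) (hy : y ∈ l) : ltIn l x y ↔ r x y := by
  have rel_of_ltIn : ∀ {a b}, a ∈ l → b ∈ l → ltIn l a b → r a b := fun ha hb h => by
    simpa only [getElem_idxOf] using pairwise_iff_getElem.1 hl _ _
      (idxOf_lt_length_iff.2 ha) (idxOf_lt_length_iff.2 hb) h
  refine ⟨rel_of_ltIn hx hy, fun hxy => ?_⟩
  have hne : x ≠ y := by rintro rfl; exact hr x x hxy hxy
  exact (ltIn_total hx hne).resolve_right fun h => hr x y hxy (rel_of_ltIn hy hx h)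

theorem ltIn_append_of_mem_of_not_mem (hx : x ∈ l₁) (hy : y ∉ l₁) : ltIn (l₁ ++ l₂) x y := by
  unfold ltIn
  rw [idxOf_append_of_mem hx, idxOf_append_of_notMem hy]
  exact (idxOf_lt_length_iff.2 hx).trans_le (Nat.le_add_right _ _)

theorem ltIn_append_left (hx : x ∈ l₁) (hy : y ∈ l₁) : ltIn (l₁ ++ l₂) x y ↔ ltIn l₁ x y := by
  unfold ltIn
  rw [idxOf_append_of_mem hx, idxOf_append_of_mem hy]

theorem ltIn_append_right (hx : x ∉ l₁) (hy : y ∉ l₁) : ltIn (l₁ ++ l₂) x y ↔ ltIn l₂ x y := by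
  unfold ltIn
  rw [idxOf_append_of_notMem hx, idxOf_append_of_notMem hy, Nat.add_lt_add_iff_left]

theorem LinWords.mem_iff (hσ : σ ∈ LinWords n) : x ∈ σ ↔ x ∈ range' 1 n :=
  Perm.mem_iff hσ

theorem LinWords.mem_of_mem (hσ : σ ∈ LinWords n) (hτ : τ ∈ LinWords n) (hx : x ∈ σ) : x ∈ τ :=
  (LinWords.mem_iff hτ).2 ((LinWords.mem_iff hσ).1 hx)

theorem LinWords.nodup (hσ : σ ∈ LinWords n) : σ.Nodup :=
  Perm.nodup_iff hσ |>.2 nodup_range'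

theorem LinWords.length_eq (hσ : σ ∈ LinWords n) : σ.length = n :=
  (Perm.length_eq hσ).trans length_range'

end Words

section Ideals

variable {σ : List ℕ} {A : Set ℕ} {n x y : ℕ}

theorem ltIn_of_mem_idSet (hA : A ∈ IdSet σ) (hx : x ∈ A) (hy : y ∈ σ) (hyA : y ∉ A) :
    ltIn σ x y :=
  (ltIn_total (hA.1 x hx) (ne_of_mem_of_not_mem hx hyA)).resolve_right
    fun h => hyA (hA.2 x hx y hy h)

def prefixSet (σ : List ℕ) (k : ℕ) : Set ℕ := {x | x ∈ σ ∧ σ.idxOf x < k}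

theorem prefixSet_mem_idSet (σ : List ℕ) (k : ℕ) : prefixSet σ k ∈ IdSet σ :=
  ⟨fun _ hx => hx.1, fun _ hx _ hy hyx => ⟨hy, hyx.trans hx.2⟩⟩

theorem exists_eq_prefixSet (hσ : σ.Nodup) (hA : A ∈ IdSet σ) :
    ∃ k ≤ σ.length, A = prefixSet σ k := by
  classical
  set k := σ.findIdx fun x => decide (x ∉ A)
  refine ⟨k, findIdx_le_length, Set.ext fun x => ⟨fun hx => ?_, fun hx => ?_⟩⟩
  · have hxσ := hA.1 x hx
    refine ⟨hxσ, Nat.lt_of_not_le fun hkx => ?_⟩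
    have hk : k < σ.length := hkx.trans_lt (idxOf_lt_length_iff.2 hxσ)
    have hyA : σ[k] ∉ A := by
      have := findIdx_getElem (w := hk)
      simp only [decide_eq_true_eq] at this
      exact this
    have := ltIn_of_mem_idSet hA hx (getElem_mem hk) hyA
    rw [ltIn, hσ.idxOf_getElem] at this
    omega
  · simpa [getElem_idxOf] using not_of_lt_findIdx hx.2

theorem prefixSet_injOn (hσ : σ.Nodup) : Set.InjOn (prefixSet σ) (Set.Iic σ.length) := by
  intro k hk k' hk' hkk'
  by_contra hne
  wlog hlt : k < k' generalizing k k'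
  · exact this hk' hk hkk'.symm (Ne.symm hne) (by omega)
  have hk_lt : k < σ.length := hlt.trans_le hk'
  have hmem : σ[k] ∈ prefixSet σ k' := ⟨getElem_mem hk_lt, by rwa [hσ.idxOf_getElem]⟩
  rw [← hkk'] at hmem
  exact hmem.2.ne (hσ.idxOf_getElem k hk_lt)

theorem idSet_eq_image_prefixSet (hσ : σ.Nodup) :
    IdSet σ = prefixSet σ '' Set.Iic σ.length := by
  ext A
  constructor
  · intro hA
    obtain ⟨k, hk, rfl⟩ := exists_eq_prefixSet hσ hA
    exact ⟨k, hk, rfl⟩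
  · rintro ⟨k, -, rfl⟩
    exact prefixSet_mem_idSet σ k

theorem ncard_idSet (hσ : σ ∈ LinWords n) : (IdSet σ).ncard = n + 1 := by
  have hσn := LinWords.nodup hσ
  rw [idSet_eq_image_prefixSet hσn, (prefixSet_injOn hσn).ncard_image, ← Finset.coe_Iic,
    Set.ncard_coe_finset, Nat.card_Iic, LinWords.length_eq hσ]

theorem finite_idSet (hσ : σ ∈ LinWords n) : (IdSet σ).Finite :=
  Set.finite_of_ncard_ne_zero (by rw [ncard_idSet hσ]; omega)

end Ideals

section Separation

variable {σ μ τ : List ℕ} {A B : Set ℕ} {n a b c d k : ℕ}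

theorem mem_hull_of_between {S : Set ℕ} {s t z : ℕ} (hs : s ∈ S) (ht : t ∈ S)
    (h₁ : min s t ≤ z) (h₂ : z ≤ max s t) : z ∈ hull S := by
  rcases le_total s t with h | h
  · exact ⟨s, hs, t, ht, by omega, by omega⟩
  · exact ⟨t, ht, s, hs, by omega, by omega⟩

theorem separated_of_forall_lt (h : ∀ x ∈ A \ B, ∀ y ∈ B \ A, y < x) : Separated A B :=
  Set.disjoint_left.2 fun _ ⟨x, hx, _, _, hxz, _⟩ ⟨_, _, y, hy, _, hzy⟩ =>
    absurd (h x hx y hy) (by omega)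

theorem not_separated_of_crossing (ha : a ∈ A \ B) (hd : d ∈ A \ B) (hb : b ∈ B \ A)
    (hc : c ∈ B \ A) (hab : a < b) (hcd : c < d) : ¬ Separated A B :=
  Set.not_disjoint_iff.2 ⟨max (min a d) (min b c),
    mem_hull_of_between ha hd (by omega) (by omega),
    mem_hull_of_between hb hc (by omega) (by omega)⟩

theorem separated_of_invPairs_subset (hσ : σ ∈ LinWords n) (hμ : μ ∈ LinWords n)
    (hμσ : InvPairs μ ⊆ InvPairs σ) (hA : A ∈ IdSet σ) (hB : B ∈ IdSet μ) : Separated A B := by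
  refine separated_of_forall_lt fun x hx y hy => Nat.lt_of_not_le fun hxy => ?_
  have hxμ : x ∈ μ := LinWords.mem_of_mem hσ hμ (hA.1 x hx.1)
  have hxy' : x < y := hxy.lt_of_ne (ne_of_mem_of_not_mem hx.1 hy.2)
  have hinv : (x, y) ∈ InvPairs μ :=
    ⟨hxμ, hB.1 y hy.1, hxy', ltIn_of_mem_idSet hB hy.1 hxμ hx.2⟩
  exact ltIn_asymm (ltIn_of_mem_idSet hA hx.1 (LinWords.mem_of_mem hμ hσ (hB.1 y hy.1)) hy.2)
    (hμσ hinv).2.2.2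

theorem not_separated_prefixSet (ha : a ∈ A) (hd : d ∈ A) (hb : b ∈ τ) (hbA : b ∉ A)
    (hc : c ∈ τ) (hcA : c ∉ A) (hab : a < b) (hcd : c < d) (hbk : τ.idxOf b < k)
    (hck : τ.idxOf c < k) (hka : k ≤ τ.idxOf a) (hkd : k ≤ τ.idxOf d) :
    ¬ Separated A (prefixSet τ k) :=
  not_separated_of_crossing ⟨ha, fun h => absurd h.2 (Nat.not_lt.2 hka)⟩
    ⟨hd, fun h => absurd h.2 (Nat.not_lt.2 hkd)⟩ ⟨⟨hb, hbk⟩, hbA⟩ ⟨⟨hc, hck⟩, hcA⟩ hab hcd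

/-- If `b, c` precede `a, d` in `τ`, cut `τ` right before `a, d`; otherwise `τ` orders the four
as `b a c d` or as `c d b a`, and some cut of `τ` separates three of them into a crossing. -/
theorem exists_prefixSet_not_separated (ha : a ∈ A) (hd : d ∈ A) (ha' : a ∈ τ)
    (hb : b ∈ τ) (hbA : b ∉ A) (hc : c ∈ τ) (hcA : c ∉ A) (hab : a < b) (hcd : c < d)
    (hba : ltIn τ b a) (hcd' : ltIn τ c d) : ∃ k, ¬ Separated A (prefixSet τ k) := by
  have hac : τ.idxOf a ≠ τ.idxOf c := fun h => hcA ((idxOf_inj ha').1 h ▸ ha)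
  have hbd : τ.idxOf b ≠ τ.idxOf d := fun h => hbA ((idxOf_inj hb).1 h ▸ hd)
  unfold ltIn at hba hcd'
  rcases Nat.lt_or_gt_of_ne hac with hpac | hpca
  · rcases Nat.lt_or_gt_of_ne (ne_of_mem_of_not_mem hd hbA) with hdb | hbd'
    · exact ⟨τ.idxOf c + 1, not_separated_prefixSet hd hd hb hbA hc hcA hdb hcd
        (by omega) (by omega) (by omega) (by omega)⟩
    · exact ⟨τ.idxOf a, not_separated_prefixSet ha hd hb hbA hb hbA hab hbd'
        (by omega) (by omega) (by omega) (by omega)⟩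
  rcases Nat.lt_or_gt_of_ne hbd with hpbd | hpdb
  · exact ⟨min (τ.idxOf a) (τ.idxOf d), not_separated_prefixSet ha hd hb hbA hc hcA hab hcd
      (by omega) (by omega) (by omega) (by omega)⟩
  rcases Nat.lt_or_gt_of_ne (ne_of_mem_of_not_mem ha hcA) with hac' | hca'
  · exact ⟨τ.idxOf d, not_separated_prefixSet ha hd hc hcA hc hcA hac' hcd
      (by omega) (by omega) (by omega) (by omega)⟩
  · exact ⟨τ.idxOf b + 1, not_separated_prefixSet ha ha hb hbA hc hcA hab hca'
      (by omega) (by omega) (by omega) (by omega)⟩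

end Separation

section BlockWords

variable {l χ : List ℕ} {A : Set ℕ} {n x y : ℕ}

open Classical in
noncomputable def splitWord (l : List ℕ) (A : Set ℕ) : List ℕ :=
  l.filter (fun x => decide (x ∈ A)) ++ l.filter (fun x => !decide (x ∈ A))

theorem mem_splitWord : x ∈ splitWord l A ↔ x ∈ l :=
  (filter_append_perm _ l).mem_iff

theorem ltIn_splitWord {r : ℕ → ℕ → Prop} (hl : l.Pairwise r) (hr : ∀ a b, r a b → ¬ r b a)
    (hx : x ∈ l) (hy : y ∈ l) :
    ltIn (splitWord l A) x y ↔ (x ∈ A ∧ y ∉ A) ∨ ((x ∈ A ↔ y ∈ A) ∧ r x y) := by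
  classical
  have mem_left : ∀ {z}, z ∈ l → (z ∈ l.filter (fun x => decide (x ∈ A)) ↔ z ∈ A) := by
    intro z hz; simp [hz]
  have mem_right : ∀ {z}, z ∈ l → (z ∈ l.filter (fun x => !decide (x ∈ A)) ↔ z ∉ A) := by
    intro z hz; simp [hz]
  unfold splitWord
  by_cases hxA : x ∈ A <;> by_cases hyA : y ∈ A
  · rw [ltIn_append_left ((mem_left hx).2 hxA) ((mem_left hy).2 hyA),
      ltIn_iff_of_pairwise (hl.filter _) hr ((mem_left hx).2 hxA) ((mem_left hy).2 hyA)]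
    simp [hxA, hyA]
  · have := ltIn_append_of_mem_of_not_mem (l₂ := l.filter (fun x => !decide (x ∈ A)))
      ((mem_left hx).2 hxA) (mt (mem_left hy).1 hyA)
    simp [hxA, hyA, this]
  · have := ltIn_asymm (ltIn_append_of_mem_of_not_mem (l₂ := l.filter (fun x => !decide (x ∈ A)))
      ((mem_left hy).2 hyA) (mt (mem_left hx).1 hxA))
    simp [hxA, hyA, this]
  · rw [ltIn_append_right (mt (mem_left hx).1 hxA) (mt (mem_left hy).1 hyA),
      ltIn_iff_of_pairwise (hl.filter _) hr ((mem_right hx).2 hxA) ((mem_right hy).2 hyA)]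
    simp [hxA, hyA]

noncomputable def ascWord (n : ℕ) (A : Set ℕ) : List ℕ := splitWord (range' 1 n) A

noncomputable def descWord (n : ℕ) (A : Set ℕ) : List ℕ := splitWord (range' 1 n).reverse A

theorem ascWord_mem_linWords (n : ℕ) (A : Set ℕ) : ascWord n A ∈ LinWords n :=
  filter_append_perm _ _

theorem descWord_mem_linWords (n : ℕ) (A : Set ℕ) : descWord n A ∈ LinWords n :=
  (filter_append_perm _ _).trans (reverse_perm _)

theorem mem_invPairs_ascWord {i j : ℕ} :
    (i, j) ∈ InvPairs (ascWord n A) ↔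
      i ∈ range' 1 n ∧ j ∈ range' 1 n ∧ i < j ∧ j ∈ A ∧ i ∉ A := by
  simp only [InvPairs, ascWord, Set.mem_ofPred_eq, mem_splitWord]
  refine ⟨fun ⟨hi, hj, hij, h⟩ => ⟨hi, hj, hij, ?_⟩, fun ⟨hi, hj, hij, h⟩ => ⟨hi, hj, hij, ?_⟩⟩
  · rw [ltIn_splitWord pairwise_lt_range' (fun _ _ => Nat.lt_asymm) hj hi] at h
    exact h.resolve_right fun h' => by omega
  · exact (ltIn_splitWord pairwise_lt_range' (fun _ _ => Nat.lt_asymm) hj hi).2 (Or.inl h)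

theorem mem_invPairs_descWord {i j : ℕ} :
    (i, j) ∈ InvPairs (descWord n A) ↔
      i ∈ range' 1 n ∧ j ∈ range' 1 n ∧ i < j ∧ ¬ (i ∈ A ∧ j ∉ A) := by
  have hl : (range' 1 n).reverse.Pairwise (fun a b => b < a) :=
    pairwise_reverse.2 pairwise_lt_range'
  simp only [InvPairs, descWord, Set.mem_ofPred_eq, mem_splitWord, mem_reverse]
  refine ⟨fun ⟨hi, hj, hij, h⟩ => ⟨hi, hj, hij, ?_⟩, fun ⟨hi, hj, hij, h⟩ => ⟨hi, hj, hij, ?_⟩⟩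
  · rw [ltIn_splitWord hl (fun _ _ => Nat.lt_asymm) ((mem_reverse).2 hj) ((mem_reverse).2 hi)] at h
    tauto
  · rw [ltIn_splitWord hl (fun _ _ => Nat.lt_asymm) ((mem_reverse).2 hj) ((mem_reverse).2 hi)]
    tauto

theorem mem_idSet_iff (hχ : χ ∈ LinWords n) (hA : ∀ x ∈ A, x ∈ range' 1 n) :
    A ∈ IdSet χ ↔
      InvPairs (ascWord n A) ⊆ InvPairs χ ∧ InvPairs χ ⊆ InvPairs (descWord n A) := by
  constructor
  · intro hAχ
    refine ⟨fun ⟨i, j⟩ hij => ?_, fun ⟨i, j⟩ ⟨hi, hj, hij, hji⟩ => ?_⟩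
    · obtain ⟨hi, hj, hij, hjA, hiA⟩ := mem_invPairs_ascWord.1 hij
      exact ⟨(LinWords.mem_iff hχ).2 hi, (LinWords.mem_iff hχ).2 hj, hij,
        ltIn_of_mem_idSet hAχ hjA ((LinWords.mem_iff hχ).2 hi) hiA⟩
    · exact mem_invPairs_descWord.2 ⟨(LinWords.mem_iff hχ).1 hi, (LinWords.mem_iff hχ).1 hj, hij,
        fun ⟨hiA, hjA⟩ => ltIn_asymm (ltIn_of_mem_idSet hAχ hiA hj hjA) hji⟩
  · rintro ⟨hasc, hdesc⟩
    refine ⟨fun x hx => (LinWords.mem_iff hχ).2 (hA x hx), fun x hx y hy hyx => ?_⟩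
    by_contra hyA
    have hxn := hA x hx
    have hyn := (LinWords.mem_iff hχ).1 hy
    rcases Nat.lt_or_gt_of_ne (ne_of_mem_of_not_mem hx hyA) with hxy | hyx'
    · exact (mem_invPairs_descWord.1 (hdesc ⟨(LinWords.mem_iff hχ).2 hxn, hy, hxy, hyx⟩)).2.2.2
        ⟨hx, hyA⟩
    · exact ltIn_asymm hyx (hasc (mem_invPairs_ascWord.2 ⟨hyn, hxn, hyx', hx, hyA⟩)).2.2.2

end BlockWords

section WeakOrder

variable {σ τ ρ μ : List ℕ} {A : Set ℕ} {n : ℕ}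

theorem invPairs_subset_descWord_or_ascWord_subset (hτ : τ ∈ LinWords n)
    (hsep : ∀ k, Separated A (prefixSet τ k)) :
    InvPairs τ ⊆ InvPairs (descWord n A) ∨ InvPairs (ascWord n A) ⊆ InvPairs τ := by
  refine or_iff_not_imp_left.2 fun hτdesc ⟨c, d⟩ hcd_asc => by_contra fun hcd_τ => ?_
  obtain ⟨⟨a, b⟩, ⟨ha, hb, hab, hba⟩, hab_desc⟩ := Set.not_subset.1 hτdesc
  obtain ⟨haA, hbA⟩ : a ∈ A ∧ b ∉ A := not_not.1 fun h => hab_desc <|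
    mem_invPairs_descWord.2 ⟨(LinWords.mem_iff hτ).1 ha, (LinWords.mem_iff hτ).1 hb, hab, h⟩
  obtain ⟨hc, hd, hcd, hdA, hcA⟩ := mem_invPairs_ascWord.1 hcd_asc
  rw [← LinWords.mem_iff hτ] at hc hd
  have hcd' : ltIn τ c d := (ltIn_total hc hcd.ne).resolve_right fun h => hcd_τ ⟨hc, hd, hcd, h⟩
  obtain ⟨k, hk⟩ :=
    exists_prefixSet_not_separated haA hdA ha hb hbA hc hcA hab hcd hba hcd'
  exact hk (hsep k)

theorem mem_idSet_of_invPairs_subset_descWord (hσ : σ ∈ LinWords n) (hρ : ρ ∈ LinWords n)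
    (hσρ : InvPairs σ ⊆ InvPairs ρ)
    (hρlub : ∀ χ ∈ LinWords n, InvPairs σ ⊆ InvPairs χ → InvPairs τ ⊆ InvPairs χ →
      InvPairs ρ ⊆ InvPairs χ)
    (hA : A ∈ IdSet σ) (hτ : InvPairs τ ⊆ InvPairs (descWord n A)) : A ∈ IdSet ρ := by
  have hAn : ∀ x ∈ A, x ∈ range' 1 n := fun x hx => (LinWords.mem_iff hσ).1 (hA.1 x hx)
  obtain ⟨hasc, hdesc⟩ := (mem_idSet_iff hσ hAn).1 hA
  exact (mem_idSet_iff hρ hAn).2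
    ⟨hasc.trans hσρ, hρlub _ (descWord_mem_linWords n A) hdesc hτ⟩

theorem mem_idSet_of_ascWord_subset_invPairs (hσ : σ ∈ LinWords n) (hμ : μ ∈ LinWords n)
    (hμσ : InvPairs μ ⊆ InvPairs σ)
    (hμglb : ∀ χ ∈ LinWords n, InvPairs χ ⊆ InvPairs σ → InvPairs χ ⊆ InvPairs τ →
      InvPairs χ ⊆ InvPairs μ)
    (hA : A ∈ IdSet σ) (hτ : InvPairs (ascWord n A) ⊆ InvPairs τ) : A ∈ IdSet μ := by
  have hAn : ∀ x ∈ A, x ∈ range' 1 n := fun x hx => (LinWords.mem_iff hσ).1 (hA.1 x hx)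
  obtain ⟨hasc, hdesc⟩ := (mem_idSet_iff hσ hAn).1 hA
  exact (mem_idSet_iff hμ hAn).2
    ⟨hμglb _ (ascWord_mem_linWords n A) hasc hτ, hμσ.trans hdesc⟩

theorem mem_idSet_sup_or_inf (hσ : σ ∈ LinWords n) (hτ : τ ∈ LinWords n)
    (hρ : ρ ∈ LinWords n) (hμ : μ ∈ LinWords n) (hσρ : InvPairs σ ⊆ InvPairs ρ)
    (hρlub : ∀ χ ∈ LinWords n, InvPairs σ ⊆ InvPairs χ → InvPairs τ ⊆ InvPairs χ →
      InvPairs ρ ⊆ InvPairs χ)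
    (hμσ : InvPairs μ ⊆ InvPairs σ)
    (hμglb : ∀ χ ∈ LinWords n, InvPairs χ ⊆ InvPairs σ → InvPairs χ ⊆ InvPairs τ →
      InvPairs χ ⊆ InvPairs μ)
    (hA : A ∈ IdSet σ) (hsep : ∀ k, Separated A (prefixSet τ k)) :
    A ∈ IdSet ρ ∪ IdSet μ :=
  (invPairs_subset_descWord_or_ascWord_subset hτ hsep).imp
    (mem_idSet_of_invPairs_subset_descWord hσ hρ hσρ hρlub hA)
    (mem_idSet_of_ascWord_subset_invPairs hσ hμ hμσ hμglb hA)

theorem idSet_inter_subset (hσ : σ ∈ LinWords n) (hτ : τ ∈ LinWords n)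
    (hρ : ρ ∈ LinWords n) (hμ : μ ∈ LinWords n) (hσρ : InvPairs σ ⊆ InvPairs ρ)
    (hρlub : ∀ χ ∈ LinWords n, InvPairs σ ⊆ InvPairs χ → InvPairs τ ⊆ InvPairs χ →
      InvPairs ρ ⊆ InvPairs χ)
    (hμσ : InvPairs μ ⊆ InvPairs σ)
    (hμglb : ∀ χ ∈ LinWords n, InvPairs χ ⊆ InvPairs σ → InvPairs χ ⊆ InvPairs τ →
      InvPairs χ ⊆ InvPairs μ) :
    IdSet σ ∩ IdSet τ ⊆ IdSet ρ ∩ IdSet μ := by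
  rintro A ⟨hAσ, hAτ⟩
  have hAn : ∀ x ∈ A, x ∈ range' 1 n := fun x hx => (LinWords.mem_iff hσ).1 (hAσ.1 x hx)
  obtain ⟨hasc, hdesc⟩ := (mem_idSet_iff hτ hAn).1 hAτ
  exact ⟨mem_idSet_of_invPairs_subset_descWord hσ hρ hσρ hρlub hAσ hdesc,
    mem_idSet_of_ascWord_subset_invPairs hσ hμ hμσ hμglb hAσ hasc⟩

theorem sepSystem_of_idSet_union_subset (hσ : σ ∈ LinWords n) (hτ : τ ∈ LinWords n)
    (hρ : ρ ∈ LinWords n) (hμ : μ ∈ LinWords n)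
    (hμσ : InvPairs μ ⊆ InvPairs σ) (hμτ : InvPairs μ ⊆ InvPairs τ)
    (hsub : IdSet σ ∪ IdSet τ ⊆ IdSet ρ ∪ IdSet μ) : SepSystem (IdSet σ ∪ IdSet τ) := by
  have above_μ : ∀ {A}, A ∈ IdSet σ ∪ IdSet τ →
      ∃ α ∈ LinWords n, InvPairs μ ⊆ InvPairs α ∧ A ∈ IdSet α := by
    rintro A (hA | hA)
    exacts [⟨σ, hσ, hμσ, hA⟩, ⟨τ, hτ, hμτ, hA⟩]
  intro A hA B hB
  obtain ⟨α, hα, hμα, hAα⟩ := above_μ hA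
  obtain ⟨β, hβ, hμβ, hBβ⟩ := above_μ hB
  rcases hsub hA with hAρ | hAμ <;> rcases hsub hB with hBρ | hBμ
  · exact separated_of_invPairs_subset hρ hρ subset_rfl hAρ hBρ
  · exact separated_of_invPairs_subset hα hμ hμα hAα hBμ
  · exact Disjoint.symm (separated_of_invPairs_subset hβ hμ hμβ hBβ hAμ)
  · exact separated_of_invPairs_subset hμ hμ subset_rfl hAμ hBμ

end WeakOrder

theorem Set.union_eq_of_union_subset_of_inter_subset {α : Type*} {s₁ s₂ t₁ t₂ : Set α}
    (hs₁ : s₁.Finite) (hs₂ : s₂.Finite) (ht₁ : t₁.Finite) (ht₂ : t₂.Finite)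
    (hcard : t₁.ncard + t₂.ncard ≤ s₁.ncard + s₂.ncard)
    (hunion : s₁ ∪ s₂ ⊆ t₁ ∪ t₂) (hinter : s₁ ∩ s₂ ⊆ t₁ ∩ t₂) : s₁ ∪ s₂ = t₁ ∪ t₂ := by
  have hs := Set.ncard_union_add_ncard_inter s₁ s₂ hs₁ hs₂
  have ht := Set.ncard_union_add_ncard_inter t₁ t₂ ht₁ ht₂
  have hle := Set.ncard_le_ncard hinter (ht₁.inter_of_left t₂)
  exact Set.eq_of_subset_of_ncard_le hunion (by omega) (ht₁.union ht₂)

/-- for `σ, τ ∈ L([n])` with `ρ` a least upper bound and `μ` a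
greatest lower bound of `{σ, τ}` in the weak Bruhat order, the following are
equivalent: (a) `Id(σ) ∪ Id(τ)` is separated; (b) `Id(σ) ∪ Id(τ) = Id(ρ) ∪ Id(μ)`;
(c) `Id(σ) ∪ Id(τ) ⊆ Id(ρ) ∪ Id(μ)`. -/
theorem statement_11 (n : ℕ) (σ τ ρ μ : List ℕ)
    (hσ : σ ∈ LinWords n) (hτ : τ ∈ LinWords n)
    (hρ : ρ ∈ LinWords n) (hμ : μ ∈ LinWords n)
    (hρub : InvPairs σ ⊆ InvPairs ρ ∧ InvPairs τ ⊆ InvPairs ρ)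
    (hρlub : ∀ χ ∈ LinWords n, InvPairs σ ⊆ InvPairs χ → InvPairs τ ⊆ InvPairs χ →
      InvPairs ρ ⊆ InvPairs χ)
    (hμlb : InvPairs μ ⊆ InvPairs σ ∧ InvPairs μ ⊆ InvPairs τ)
    (hμglb : ∀ χ ∈ LinWords n, InvPairs χ ⊆ InvPairs σ → InvPairs χ ⊆ InvPairs τ →
      InvPairs χ ⊆ InvPairs μ) :
    (SepSystem (IdSet σ ∪ IdSet τ) ↔ IdSet σ ∪ IdSet τ = IdSet ρ ∪ IdSet μ) ∧
    (IdSet σ ∪ IdSet τ = IdSet ρ ∪ IdSet μ ↔ IdSet σ ∪ IdSet τ ⊆ IdSet ρ ∪ IdSet μ) := by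
  have hρlub' := fun χ hχ h₁ h₂ => hρlub χ hχ h₂ h₁
  have hμglb' := fun χ hχ h₁ h₂ => hμglb χ hχ h₂ h₁
  have a_to_c : SepSystem (IdSet σ ∪ IdSet τ) → IdSet σ ∪ IdSet τ ⊆ IdSet ρ ∪ IdSet μ := by
    rintro hsep A (hA | hA)
    · exact mem_idSet_sup_or_inf hσ hτ hρ hμ hρub.1 hρlub hμlb.1 hμglb hA
        fun k => hsep A (Or.inl hA) _ (Or.inr (prefixSet_mem_idSet τ k))
    · exact mem_idSet_sup_or_inf hτ hσ hρ hμ hρub.2 hρlub' hμlb.2 hμglb' hA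
        fun k => hsep A (Or.inr hA) _ (Or.inl (prefixSet_mem_idSet σ k))
  have c_to_b : IdSet σ ∪ IdSet τ ⊆ IdSet ρ ∪ IdSet μ → IdSet σ ∪ IdSet τ = IdSet ρ ∪ IdSet μ :=
    fun hsub => Set.union_eq_of_union_subset_of_inter_subset (finite_idSet hσ)
      (finite_idSet hτ) (finite_idSet hρ) (finite_idSet hμ)
      (by rw [ncard_idSet hσ, ncard_idSet hτ, ncard_idSet hρ, ncard_idSet hμ]) hsub
      (idSet_inter_subset hσ hτ hρ hμ hρub.1 hρlub hμlb.1 hμglb)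
  have c_to_a := sepSystem_of_idSet_union_subset hσ hτ hρ hμ hμlb.1 hμlb.2
  exact ⟨⟨c_to_b ∘ a_to_c, fun h => c_to_a h.subset⟩, ⟨Eq.subset, c_to_b⟩⟩
end

section
/- If D ⊆ L([n]) and D' ⊆ L([n']) are peak-pit domains, then the set of concatenations {σ*τ : σ ∈ D, τ ∈ D'} ⊆ L([n+n']) is a peak-pit domain, and its cardinality equals |D|·|D'|. -/
/-
In a concatenation `σ * τ` every alternative of `[n]` lies below every alternative of the
shifted block. A triple inside one block is ordered as in `σ` or as in `τ` (up to the shift),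
so it inherits the peak or pit condition from `D` or `D'`. A triple `i < j < k` meeting both
blocks satisfies the peak condition when `i` alone is in the lower block (`i` is below `j`) and
the pit condition otherwise (`j` is below `k`). As all words of `D` have length `n`,
concatenation is injective on `D × D'`, which gives the cardinality.
-/

theorem List.idxOf_map_add_right (l : List ℕ) (a n : ℕ) :
    (l.map (· + n)).idxOf (a + n) = l.idxOf a := by
  simp only [List.idxOf, List.findIdx_map, Function.comp_def]
  congr 1
  funext x
  simp

theorem mem_iff_of_mem_LinWords {n : ℕ} {σ : List ℕ} (hσ : σ ∈ LinWords n) {x : ℕ} :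
    x ∈ σ ↔ 1 ≤ x ∧ x ≤ n := by
  rw [List.Perm.mem_iff hσ, List.mem_range'_1]
  omega

theorem length_eq_of_mem_LinWords {n : ℕ} {σ : List ℕ} (hσ : σ ∈ LinWords n) :
    σ.length = n := by
  rw [List.Perm.length_eq hσ, List.length_range']

theorem concatWord_mem_LinWords {n n' : ℕ} {σ τ : List ℕ} (hσ : σ ∈ LinWords n)
    (hτ : τ ∈ LinWords n') : concatWord n σ τ ∈ LinWords (n + n') := by
  have hshift : (τ.map (· + n)).Perm (List.range' (1 + n) n') := by
    simpa [List.map_add_range', Nat.add_comm] using List.Perm.map (n + ·) hτ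
  simpa [LinWords, concatWord] using List.Perm.append hσ hshift

section concatWord

variable {n : ℕ} {σ τ : List ℕ}

theorem ltIn_concatWord_of_mem {a b : ℕ} (ha : a ∈ σ) (hb : b ∈ σ) :
    ltIn (concatWord n σ τ) a b ↔ ltIn σ a b := by
  rw [ltIn, ltIn, concatWord, List.idxOf_append_of_mem ha, List.idxOf_append_of_mem hb]

theorem not_ltIn_concatWord_of_notMem_of_mem {a b : ℕ} (ha : a ∉ σ) (hb : b ∈ σ) :
    ¬ ltIn (concatWord n σ τ) a b := by
  rw [ltIn, concatWord, List.idxOf_append_of_mem hb, List.idxOf_append_of_notMem ha, not_lt]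
  exact (List.idxOf_lt_length_of_mem hb).le.trans (Nat.le_add_right _ _)

theorem ltIn_concatWord_add_add {a b : ℕ} (ha : a + n ∉ σ) (hb : b + n ∉ σ) :
    ltIn (concatWord n σ τ) (a + n) (b + n) ↔ ltIn τ a b := by
  rw [ltIn, ltIn, concatWord, List.idxOf_append_of_notMem ha, List.idxOf_append_of_notMem hb,
    List.idxOf_map_add_right, List.idxOf_map_add_right, Nat.add_lt_add_iff_left]

end concatWord

theorem peakCond_or_pitCond_of_shift {D E : Set (List ℕ)} {i j k m : ℕ}
    (hE : ∀ w ∈ E, ∃ σ ∈ D, ∀ x y, i ≤ x → x ≤ k → i ≤ y → y ≤ k →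
      (ltIn w (x + m) (y + m) ↔ ltIn σ x y))
    (hij : i < j) (hjk : j < k) (h : PeakCond D i j k ∨ PitCond D i j k) :
    PeakCond E (i + m) (j + m) (k + m) ∨ PitCond E (i + m) (j + m) (k + m) := by
  rcases h with hpeak | hpit
  · refine .inl fun w hw => ?_
    obtain ⟨σ, hσ, hiff⟩ := hE w hw
    rw [hiff j i, hiff j k]
    · exact hpeak σ hσ
    all_goals omega
  · refine .inr fun w hw => ?_
    obtain ⟨σ, hσ, hiff⟩ := hE w hw
    rw [hiff i j, hiff k j]
    · exact hpit σ hσ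
    all_goals omega

theorem IsPeakPit.concatDomain {n n' : ℕ} {D D' : Set (List ℕ)} (hD : D ⊆ LinWords n)
    (hpp : IsPeakPit n D) (hpp' : IsPeakPit n' D') :
    IsPeakPit (n + n') (ConcatDomain n D D') := by
  intro i j k hi hij hjk hk
  have mem_left {σ x} (hσ : σ ∈ D) (h1 : 1 ≤ x) (hx : x ≤ n) : x ∈ σ :=
    (mem_iff_of_mem_LinWords (hD hσ)).2 ⟨h1, hx⟩
  have notMem_right {σ x} (hσ : σ ∈ D) (hx : n < x) : x ∉ σ := fun h =>
    absurd ((mem_iff_of_mem_LinWords (hD hσ)).1 h).2 hx.not_ge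
  rcases le_or_gt k n with hkn | hnk
  · simpa using peakCond_or_pitCond_of_shift (m := 0)
      (by
        rintro _ ⟨σ, hσ, τ, -, rfl⟩
        exact ⟨σ, hσ, fun x y hx _ hy _ => ltIn_concatWord_of_mem
          (mem_left hσ (by omega) (by omega)) (mem_left hσ (by omega) (by omega))⟩)
      hij hjk (hpp i j k hi hij hjk hkn)
  rcases le_or_gt j n with hjn | hnj
  · refine .inr ?_
    rintro _ ⟨σ, hσ, τ, -, rfl⟩ ⟨-, hkj⟩
    exact not_ltIn_concatWord_of_notMem_of_mem (notMem_right hσ hnk)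
      (mem_left hσ (by omega) hjn) hkj
  rcases le_or_gt i n with hin | hni
  · refine .inl ?_
    rintro _ ⟨σ, hσ, τ, -, rfl⟩ ⟨hji, -⟩
    exact not_ltIn_concatWord_of_notMem_of_mem (notMem_right hσ hnj) (mem_left hσ hi hin) hji
  obtain ⟨a, rfl⟩ : ∃ a, i = a + n := ⟨i - n, by omega⟩
  obtain ⟨b, rfl⟩ : ∃ b, j = b + n := ⟨j - n, by omega⟩
  obtain ⟨c, rfl⟩ : ∃ c, k = c + n := ⟨k - n, by omega⟩
  refine peakCond_or_pitCond_of_shift ?_ (by omega) (by omega)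
    (hpp' a b c (by omega) (by omega) (by omega) (by omega))
  rintro _ ⟨σ, hσ, τ, hτ, rfl⟩
  exact ⟨τ, hτ, fun x y hx _ hy _ => ltIn_concatWord_add_add
    (notMem_right hσ (by omega)) (notMem_right hσ (by omega))⟩

theorem ncard_concatDomain {n : ℕ} {D : Set (List ℕ)} (hD : D ⊆ LinWords n)
    (D' : Set (List ℕ)) : (ConcatDomain n D D').ncard = D.ncard * D'.ncard := by
  have himage : ConcatDomain n D D' =
      (fun p : List ℕ × List ℕ => concatWord n p.1 p.2) '' D ×ˢ D' := by
    ext l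
    simp [ConcatDomain, eq_comm]
  have hinj : Set.InjOn (fun p : List ℕ × List ℕ => concatWord n p.1 p.2) (D ×ˢ D') := by
    rintro ⟨σ₁, τ₁⟩ ⟨hσ₁, -⟩ ⟨σ₂, τ₂⟩ ⟨hσ₂, -⟩ heq
    have hlen : σ₁.length = σ₂.length := by
      rw [length_eq_of_mem_LinWords (hD hσ₁), length_eq_of_mem_LinWords (hD hσ₂)]
    obtain ⟨rfl, hτ⟩ := List.append_inj heq hlen
    exact Prod.ext rfl (List.map_injective_iff.2 (add_left_injective n) hτ)
  rw [himage, hinj.ncard_image, Set.ncard_prod]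

/-- the concatenation of two peak-pit domains is a peak-pit domain
in `L([n+n'])` of cardinality `|D| · |D'|`. -/
theorem statement_12 (n n' : ℕ) (D D' : Set (List ℕ))
    (hD : D ⊆ LinWords n) (hD' : D' ⊆ LinWords n')
    (hpp : IsPeakPit n D) (hpp' : IsPeakPit n' D') :
    ConcatDomain n D D' ⊆ LinWords (n + n') ∧
    IsPeakPit (n + n') (ConcatDomain n D D') ∧
    (ConcatDomain n D D').ncard = D.ncard * D'.ncard := by
  refine ⟨?_, hpp.concatDomain hD hpp', ncard_concatDomain hD D'⟩
  rintro _ ⟨σ, hσ, τ, hτ, rfl⟩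
  exact concatWord_mem_LinWords (hD hσ) (hD' hτ)
end
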